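/- Let β = (βx, βy) ∈ (0,∞)², z = (x,y) ∈ X × Y with f(x) < +∞, let p = Prox_{βx⁻¹ f}(x − βx⁻¹ Aᵀ y), and set ã = βx(x − p) − Aᵀy (so that ã ∈ ∂f(p)). Then f(x) + f*(ã) − ⟨x, ã⟩ ≤ G_β(z). -/

import Mathlib

open scoped RealInnerProductSpace
open Filter Topology Metric

noncomputable section

variable {X Y : Type*} [NormedAddCommGroup X] [InnerProductSpace ℝ X]
  [NormedAddCommGroup Y] [InnerProductSpace ℝ Y]

/-- The Lagrangian `L(x, y) = f(x) + ⟪A x − b, y⟫`. -/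
def Lag (f : X → EReal) (A : X →L[ℝ] Y) (b : Y) (x : X) (y : Y) : EReal :=
  f x + ((⟪A x - b, y⟫ : ℝ) : EReal)

/-- The smoothed duality gap `G_β((x, y); (xd, yd))`, valued in `ℝ ∪ {+∞}` (here `EReal`;
the inner expression is `−∞` exactly when `f x' = +∞`, so such `x'` do not contribute). -/
def smoothedGap (f : X → EReal) (A : X →L[ℝ] Y) (b : Y) (βx βy : ℝ)
    (x : X) (y : Y) (xd : X) (yd : Y) : EReal :=
  ⨆ w : X × Y,
    (Lag f A b x w.2 - Lag f A b w.1 y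
      - ((βx / 2 * ‖w.1 - xd‖ ^ 2 + βy / 2 * ‖w.2 - yd‖ ^ 2 : ℝ) : EReal))

/-- `f` is proper: never `−∞` and not identically `+∞`. -/
def EProper (f : X → EReal) : Prop := (∀ u, f u ≠ ⊥) ∧ ∃ u, f u ≠ ⊤

/-- Convexity for an `EReal`-valued function. -/
def EConvexOn (f : X → EReal) : Prop :=
  ∀ u v : X, ∀ t : ℝ, 0 ≤ t → t ≤ 1 →
    f (t • u + (1 - t) • v) ≤ (t : EReal) * f u + ((1 - t : ℝ) : EReal) * f v

/-- The subdifferential `∂f(x) = {q | ∀ u, f(u) ≥ f(x) + ⟪q, u − x⟫}`. -/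
def ESubdiff (f : X → EReal) (x : X) : Set X :=
  {q | ∀ u : X, f x + ((⟪q, u - x⟫ : ℝ) : EReal) ≤ f u}

/-- `p = Prox_{s f}(v)`: `p` is the (unique) minimizer of `f(·) + (1/(2s))‖· − v‖²`. -/
def IsProx (f : X → EReal) (s : ℝ) (v p : X) : Prop :=
  ∀ u : X, f p + ((1 / (2 * s) * ‖p - v‖ ^ 2 : ℝ) : EReal)
    ≤ f u + ((1 / (2 * s) * ‖u - v‖ ^ 2 : ℝ) : EReal)

/-- The Fenchel–Legendre conjugate `f*(φ) = sup_u (⟪φ, u⟫ − f(u))`. -/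
def fenchel (f : X → EReal) (φ : X) : EReal := ⨆ u : X, (((⟪φ, u⟫ : ℝ) : EReal) - f u)

/-- The domain of the Fenchel conjugate. -/
def fdom (f : X → EReal) : Set X := {φ | fenchel f φ ≠ ⊤}

/-- `a = Proj_S(v)`: `a` is the (unique, for `S` closed convex nonempty) Euclidean
projection of `v` onto `S`. -/
def IsProj (S : Set X) (v a : X) : Prop := a ∈ S ∧ ∀ u ∈ S, ‖a - v‖ ≤ ‖u - v‖

/-- `(xs, ys)` is a saddle point of the Lagrangian. -/
def IsSaddle (f : X → EReal) (A : X →L[ℝ] Y) (b : Y) (xs : X) (ys : Y) : Prop :=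
  ∀ (x' : X) (y' : Y), Lag f A b xs y' ≤ Lag f A b xs ys ∧ Lag f A b xs ys ≤ Lag f A b x' ys

/-- The set of saddle points `Z⋆`. -/
def saddleSet (f : X → EReal) (A : X →L[ℝ] Y) (b : Y) : Set (X × Y) :=
  {zs | IsSaddle f A b zs.1 zs.2}

/-- Euclidean distance from a point of `X × Y` to a set. -/
def distZ (z : X × Y) (S : Set (X × Y)) : ℝ :=
  ⨅ w : S, Real.sqrt (‖z.1 - (w : X × Y).1‖ ^ 2 + ‖z.2 - (w : X × Y).2‖ ^ 2)

/-- The projected duality gap `D(z)`, where `fx = f(x)` and `fa = f*(a)` (both finite). -/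
def PDG (fx fa : ℝ) (A : X →L[ℝ] Y) (At : Y →L[ℝ] X) (b : Y) (a x : X) (y : Y) : ℝ :=
  |fx + fa + ⟪b, y⟫| ^ 2 + ‖a + At y‖ ^ 2 + ‖A x - b‖ ^ 2

/-!
The optimality of `p` for the prox problem, tested against the points `p + t • (u - p)` of
the segment to `u` and letting `t → 0`, shows `ã ∈ ∂f(p)`; hence `f*(ã) ≤ ⟪ã, p⟫ - f(p)`
(Fenchel–Young). With `ã = βx (x - p) - Aᵀy` the left side is then at most
`f(x) - f(p) + ⟪A (x - p), y⟫ - βx ‖x - p‖²`, which is bounded by the term of the supremum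
defining `G_β(z)` at `(x', y') = (p, y)`.
-/

theorem le_of_forall_pos_le_add_mul {a b C : ℝ}
    (h : ∀ t : ℝ, 0 < t → t ≤ 1 → a ≤ b + t * C) : a ≤ b := by
  have hlim : Tendsto (fun t : ℝ => b + t * C) (𝓝[>] 0) (𝓝 b) := by
    have : Continuous fun t : ℝ => b + t * C := by fun_prop
    simpa using (this.tendsto 0).mono_left nhdsWithin_le_nhds
  exact ge_of_tendsto hlim <|
    Filter.mem_of_superset (Ioc_mem_nhdsGT zero_lt_one) fun t ht => h t ht.1 ht.2

theorem IsProx.ne_top {E : Type*} [NormedAddCommGroup E] {f : E → EReal} {s : ℝ} {v p u : E}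
    (hp : IsProx f s v p) (hu : f u ≠ ⊤) : f p ≠ ⊤ := by
  intro h
  have := hp u
  rw [h, EReal.top_add_coe, top_le_iff] at this
  exact EReal.add_ne_top hu (EReal.coe_ne_top _) this

theorem norm_smul_add_one_sub_smul_sub_sq (t : ℝ) (u p v : X) :
    ‖t • u + (1 - t) • p - v‖ ^ 2
      = ‖p - v‖ ^ 2 + 2 * t * ⟪p - v, u - p⟫ + t ^ 2 * ‖u - p‖ ^ 2 := by
  have : t • u + (1 - t) • p - v = (p - v) + t • (u - p) := by module
  rw [this, norm_add_sq_real, norm_smul, inner_smul_right, mul_pow, Real.norm_eq_abs, sq_abs]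
  ring

theorem IsProx.inv_smul_sub_mem_ESubdiff {f : X → EReal} {s r : ℝ} {v p : X}
    (hf : EConvexOn f) (hp : IsProx f s v p) (hfp : f p = r) :
    s⁻¹ • (v - p) ∈ ESubdiff f p := by
  intro u
  rw [hfp]
  induction hu : f u using EReal.rec with
  | bot =>
    have := hp u
    rw [hfp, hu, EReal.bot_add, ← EReal.coe_add, le_bot_iff] at this
    exact absurd this (EReal.coe_ne_bot _)
  | top => exact le_top
  | coe fu =>
    norm_cast
    refine le_of_forall_pos_le_add_mul (C := 1 / (2 * s) * ‖u - p‖ ^ 2) fun t ht0 ht1 => ?_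
    have hmid : f p + ((1 / (2 * s) * ‖p - v‖ ^ 2 : ℝ) : EReal)
        ≤ ((t * fu + (1 - t) * r : ℝ) : EReal)
          + ((1 / (2 * s) * ‖t • u + (1 - t) • p - v‖ ^ 2 : ℝ) : EReal) :=
      (hp _).trans <| add_le_add (by exact_mod_cast hu ▸ hfp ▸ hf u p t ht0.le ht1) le_rfl
    rw [hfp] at hmid
    norm_cast at hmid
    rw [norm_smul_add_one_sub_smul_sub_sq] at hmid
    have hs : s⁻¹ = 2 * (1 / (2 * s)) := by ring
    have hinner : ⟪s⁻¹ • (v - p), u - p⟫ = -(s⁻¹ * ⟪p - v, u - p⟫) := by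
      rw [real_inner_smul_left, ← neg_sub p v, inner_neg_left, mul_neg]
    rw [hinner, hs]
    refine le_of_mul_le_mul_left ?_ ht0
    linarith

theorem fenchel_le_of_mem_ESubdiff {f : X → EReal} {p q : X} {r : ℝ}
    (hq : q ∈ ESubdiff f p) (hfp : f p = r) : fenchel f q ≤ ((⟪q, p⟫ - r : ℝ) : EReal) := by
  refine iSup_le fun u => ?_
  have hu := hq u
  rw [hfp] at hu
  induction hfu : f u using EReal.rec with
  | bot =>
    rw [hfu, ← EReal.coe_add, le_bot_iff] at hu
    exact absurd hu (EReal.coe_ne_bot _)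
  | top => simp
  | coe fu =>
    rw [hfu] at hu
    norm_cast at hu ⊢
    rw [inner_sub_right] at hu
    linarith

theorem fenchel_gap_le_smoothedGap_general
    (f : X → EReal) (A : X →L[ℝ] Y) (At : Y →L[ℝ] X) (b : Y)
    (hf_proper : EProper f) (hf_conv : EConvexOn f)
    (hAt : ∀ (u : X) (v : Y), ⟪A u, v⟫ = ⟪u, At v⟫)
    (βx βy : ℝ) (hβx : 0 < βx)
    (x : X) (y : Y) (hfx : f x < ⊤)
    (p : X) (hp : IsProx f βx⁻¹ (x - βx⁻¹ • At y) p) :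
    f x + fenchel f (βx • (x - p) - At y)
        - ((⟪x, βx • (x - p) - At y⟫ : ℝ) : EReal)
      ≤ smoothedGap f A b βx βy x y x y := by
  obtain ⟨rx, hrx⟩ : ∃ r : ℝ, f x = r :=
    ⟨_, (EReal.coe_toReal hfx.ne (hf_proper.1 x)).symm⟩
  obtain ⟨rp, hrp⟩ : ∃ r : ℝ, f p = r :=
    ⟨_, (EReal.coe_toReal (hp.ne_top hfx.ne) (hf_proper.1 p)).symm⟩
  set a := βx • (x - p) - At y
  have ha : βx⁻¹⁻¹ • (x - βx⁻¹ • At y - p) = a := by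
    rw [inv_inv, smul_sub, smul_sub, smul_inv_smul₀ hβx.ne', sub_right_comm, ← smul_sub]
  have hfen : fenchel f a ≤ ((⟪a, p⟫ - rp : ℝ) : EReal) :=
    fenchel_le_of_mem_ESubdiff (ha ▸ hp.inv_smul_sub_mem_ESubdiff hf_conv hrp) hrp
  have hlin : ⟪A x - b, y⟫ - ⟪A p - b, y⟫ = ⟪x - p, At y⟫ := by
    rw [← inner_sub_left, sub_sub_sub_cancel_right, ← map_sub, hAt]
  have hquad : ⟪a, p⟫ - ⟪x, a⟫ = ⟪x - p, At y⟫ - βx * ‖x - p‖ ^ 2 := by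
    rw [real_inner_comm a x, ← inner_sub_right, ← neg_sub x p, inner_neg_right, inner_sub_left,
      real_inner_smul_left, real_inner_self_eq_norm_sq, real_inner_comm]
    ring
  calc f x + fenchel f a - ((⟪x, a⟫ : ℝ) : EReal)
      ≤ ((rx + (⟪a, p⟫ - rp) - ⟪x, a⟫ : ℝ) : EReal) := by
        rw [hrx]
        exact_mod_cast EReal.sub_le_sub (add_le_add le_rfl hfen) le_rfl
    _ ≤ ((rx + ⟪A x - b, y⟫ - (rp + ⟪A p - b, y⟫)
          - (βx / 2 * ‖p - x‖ ^ 2 + βy / 2 * ‖y - y‖ ^ 2) : ℝ) : EReal) := by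
        rw [EReal.coe_le_coe_iff, norm_sub_rev p x, sub_self, norm_zero]
        linarith [mul_nonneg hβx.le (sq_nonneg ‖x - p‖)]
    _ = Lag f A b x y - Lag f A b p y
          - ((βx / 2 * ‖p - x‖ ^ 2 + βy / 2 * ‖y - y‖ ^ 2 : ℝ) : EReal) := by
        simp only [Lag, hrx, hrp]
        norm_cast
    _ ≤ smoothedGap f A b βx βy x y x y := le_iSup_of_le (p, y) le_rfl

/-- approximate duality-gap upper bound via the smoothed gap.
Let `p = Prox_{βx⁻¹ f}(x − βx⁻¹ Aᵀy)` and `ã = βx(x − p) − Aᵀy` (so that `ã ∈ ∂f(p)`).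
Then `f(x) + f*(ã) − ⟪x, ã⟫ ≤ G_β(z)`. -/
theorem fenchel_gap_le_smoothedGap
    [FiniteDimensional ℝ X] [FiniteDimensional ℝ Y]
    (f : X → EReal) (A : X →L[ℝ] Y) (At : Y →L[ℝ] X) (b : Y)
    (hf_proper : EProper f) (hf_lsc : LowerSemicontinuous f) (hf_conv : EConvexOn f)
    (hAt : ∀ (u : X) (v : Y), ⟪A u, v⟫ = ⟪u, At v⟫)
    (βx βy : ℝ) (hβx : 0 < βx) (hβy : 0 < βy)
    (x : X) (y : Y) (hfx : f x < ⊤)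
    (p : X) (hp : IsProx f βx⁻¹ (x - βx⁻¹ • At y) p) :
    f x + fenchel f (βx • (x - p) - At y)
        - ((⟪x, βx • (x - p) - At y⟫ : ℝ) : EReal)
      ≤ smoothedGap f A b βx βy x y x y :=
  fenchel_gap_le_smoothedGap_general f A At b hf_proper hf_conv hAt βx βy hβx x y hfx p hp
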